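/- Let X and Y be Polish spaces, γ an ordinal with ω ≤ γ < ω₁, and f : X → Y a Σ⁰_γ-measurable function. Then for every ordinal δ ≥ γ·ω and every A ∈ Σ⁰_δ(Y), the preimage f⁻¹(A) belongs to Σ⁰_δ(X). -/

import Mathlib

open Ordinal

/-- The additive Borel hierarchy on a topological space: `SigmaO X ξ s` says that `s` is
`Σ⁰_ξ`. Every open set is `Σ⁰_ξ` for every `ξ ≥ 1`, and for `ξ ≥ 1` a countable union of
sets, each of which is `Π⁰_η` (i.e. has `Σ⁰_η` complement) for some `η < ξ`, is `Σ⁰_ξ`. -/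
inductive SigmaO (X : Type*) [TopologicalSpace X] : Ordinal.{0} → Set X → Prop where
  | of_isOpen {ξ : Ordinal} (s : Set X) (hs : IsOpen s) (hξ : 1 ≤ ξ) : SigmaO X ξ s
  | iUnion {ξ : Ordinal} (s : ℕ → Set X) (η : ℕ → Ordinal)
      (hη : ∀ n, η n < ξ) (h : ∀ n, SigmaO X (η n) (s n)ᶜ) : SigmaO X ξ (⋃ n, s n)

theorem SigmaO.mono {X : Type*} [TopologicalSpace X] {ξ ξ' : Ordinal} {s : Set X}
    (h : SigmaO X ξ s) (hle : ξ ≤ ξ') : SigmaO X ξ' s := by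
  induction h with
  | of_isOpen s hs hξ => exact .of_isOpen s hs (hξ.trans hle)
  | iUnion s η hη h ih => exact .iUnion s η (fun n => (hη n).trans_le hle) h

theorem SigmaO.preimage_aux {X Y : Type} [TopologicalSpace X] [TopologicalSpace Y]
    (γ : Ordinal) (f : X → Y) (hf : ∀ U : Set Y, IsOpen U → SigmaO X γ (f ⁻¹' U))
    {ξ : Ordinal} {A : Set Y} (hA : SigmaO Y ξ A) : SigmaO X (γ + ξ) (f ⁻¹' A) := by
  induction hA with
  | of_isOpen s hs hξ => exact (hf s hs).mono (le_self_add (a := γ))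
  | iUnion s η hη h ih =>
    rw [Set.preimage_iUnion]
    exact .iUnion _ (fun n => γ + η n) (fun n => (add_lt_add_iff_left γ).2 (hη n))
      (fun n => by rw [← Set.preimage_compl]; exact ih n)

/-- Let `X`, `Y` be Polish spaces, `ω ≤ γ < ω₁`, and `f : X → Y` a `Σ⁰_γ`-measurable
function (preimages of open sets are `Σ⁰_γ`). Then for every ordinal `δ ≥ γ·ω` and every
`A ∈ Σ⁰_δ(Y)`, the preimage `f ⁻¹' A` belongs to `Σ⁰_δ(X)`. -/
theorem preimage_sigmaO_of_ge_mul_omega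
    {X Y : Type} [TopologicalSpace X] [PolishSpace X] [TopologicalSpace Y] [PolishSpace Y]
    (γ : Ordinal) (hγω : Ordinal.omega0 ≤ γ) (hγc : γ.card ≤ Cardinal.aleph0)
    (f : X → Y) (hf : ∀ U : Set Y, IsOpen U → SigmaO X γ (f ⁻¹' U)) :
    ∀ δ : Ordinal, γ * Ordinal.omega0 ≤ δ →
      ∀ A : Set Y, SigmaO Y δ A → SigmaO X δ (f ⁻¹' A) := by
  intro δ hδ A hA
  have h1 : γ + δ = δ := by
    obtain ⟨e, rfl⟩ : ∃ e, γ * Ordinal.omega0 + e = δ := ⟨δ - γ * Ordinal.omega0, Ordinal.add_sub_cancel_of_le hδ⟩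
    rw [← add_assoc]
    congr 1
    conv_rhs => rw [← Ordinal.one_add_omega0, mul_add, mul_one]
  have := SigmaO.preimage_aux γ f hf hA
  rwa [h1] at this
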